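/- Under the prior (1−w)δ₀ + w γ(·;c) with γ symmetric about c and unimodal, and likelihood X|μ ∼ N(μ,1), the posterior median δ(x;w,c) satisfies |δ(x;w,c)| ≤ |x| ∨ |c| for all x ∈ ℝ, all w ∈ [0,1] and all c ∈ ℝ. -/

import Mathlib

open MeasureTheory Real

/-- Standard normal density. -/
noncomputable def stdN (x : ℝ) : ℝ := (Real.sqrt (2 * Real.pi))⁻¹ * Real.exp (-x ^ 2 / 2)

/-- Convolution `g(x;c) = ∫ φ(x−μ) γ₀(μ−c) dμ`. -/
noncomputable def conv (γ₀ : ℝ → ℝ) (c x : ℝ) : ℝ := ∫ μ : ℝ, stdN (x - μ) * γ₀ (μ - c)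

/-- Marginal density `m(x;w,c) = (1−w)φ(x) + w g(x;c)`. -/
noncomputable def marg (γ₀ : ℝ → ℝ) (w c x : ℝ) : ℝ := (1 - w) * stdN x + w * conv γ₀ c x

/-- Posterior CDF of `μ` given `X = x` under the prior `(1−w)δ₀ + w γ₀(·−c)`
and likelihood `X | μ ∼ N(μ,1)`. -/
noncomputable def postCDF (γ₀ : ℝ → ℝ) (w c x t : ℝ) : ℝ :=
  ((1 - w) * stdN x * (if (0:ℝ) ≤ t then 1 else 0)
    + w * ∫ μ in Set.Iic t, stdN (x - μ) * γ₀ (μ - c)) / marg γ₀ w c x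

/-- Posterior median. -/
noncomputable def postMedian (γ₀ : ℝ → ℝ) (w c x : ℝ) : ℝ :=
  sInf {t : ℝ | 1 / 2 ≤ postCDF γ₀ w c x t}

/-!
Let `k(μ) = φ(x − μ) γ₀(μ − c)` (`postKernel`), the unnormalised density of the continuous part
of the posterior, and `M = |x| ∨ |c|`. Reflecting `μ` across `M` (or `-M`) towards `x` and `c`
moves it closer to both, so it can only increase `k`, since `φ` and `γ₀` are unimodal. Hence `k`
puts at least half its mass on `(-∞, M]` and at most half on `(-∞, -M]`. The atom at
`0 ∈ [-M, M]` only helps: the posterior CDF is `≥ 1/2` at `M` and `< 1/2` left of `-M`, so the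
median lies in `[-M, M]`. Strictness when `w = 1` comes from unimodality of `γ₀`: either `k`
vanishes on `(-∞, t]`, or it is positive on all of `(t, -M)`.
-/

open Set

lemma stdN_pos (y : ℝ) : 0 < stdN y := by
  unfold stdN; positivity

lemma stdN_le (y : ℝ) : stdN y ≤ (Real.sqrt (2 * Real.pi))⁻¹ :=
  mul_le_of_le_one_right (by positivity) (Real.exp_le_one_iff.mpr (by nlinarith [sq_nonneg y]))

lemma stdN_le_stdN_of_abs_le {u v : ℝ} (h : |u| ≤ |v|) : stdN v ≤ stdN u := by
  unfold stdN
  gcongr _ * exp (-?_ / 2)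
  exact sq_le_sq.mpr h

lemma continuous_stdN : Continuous stdN := by
  unfold stdN; fun_prop

lemma abs_sub_reflect_le {y a μ : ℝ} (h : (y - a) * (μ - a) ≤ 0) :
    |y - (2 * a - μ)| ≤ |y - μ| :=
  sq_le_sq.mp (by nlinarith)

lemma setIntegral_preimage_sub_left (f : ℝ → ℝ) (b : ℝ) (s : Set ℝ) :
    ∫ μ in (fun μ => b - μ) ⁻¹' s, f (b - μ) = ∫ μ in s, f μ :=
  (Measure.measurePreserving_sub_left volume b).setIntegral_preimage_emb
    (Homeomorph.subLeft b).measurableEmbedding f s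

lemma setIntegral_Ici_comp_reflect (f : ℝ → ℝ) (a : ℝ) :
    ∫ μ in Ici a, f (2 * a - μ) = ∫ μ in Iic a, f μ := by
  rw [← setIntegral_preimage_sub_left f (2 * a) (Iic a), preimage_const_sub_Iic, two_mul,
    add_sub_cancel_right]

lemma setIntegral_Iic_comp_reflect (f : ℝ → ℝ) (a : ℝ) :
    ∫ μ in Iic a, f (2 * a - μ) = ∫ μ in Ici a, f μ := by
  rw [← setIntegral_preimage_sub_left f (2 * a) (Ici a), preimage_const_sub_Ici, two_mul,
    add_sub_cancel_right]

lemma half_integral_le_setIntegral_Iic_of_reflect {f : ℝ → ℝ} (hf : Integrable f) {a : ℝ}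
    (h : ∀ μ, a ≤ μ → f μ ≤ f (2 * a - μ)) :
    (∫ μ, f μ) / 2 ≤ ∫ μ in Iic a, f μ := by
  have hright : ∫ μ in Ici a, f μ ≤ ∫ μ in Iic a, f μ := by
    rw [← setIntegral_Ici_comp_reflect f a]
    exact setIntegral_mono_on hf.integrableOn (hf.comp_sub_left (2 * a)).integrableOn
      measurableSet_Ici h
  have hsplit := intervalIntegral.integral_Iio_add_Ici (μ := volume) hf.integrableOn
    hf.integrableOn (b := a)
  rw [← integral_Iic_eq_integral_Iio] at hsplit
  linarith

lemma setIntegral_Iic_le_half_integral_of_reflect {f : ℝ → ℝ} (hf : Integrable f) {a : ℝ}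
    (h : ∀ μ, μ ≤ a → f μ ≤ f (2 * a - μ)) :
    ∫ μ in Iic a, f μ ≤ (∫ μ, f μ) / 2 := by
  have hleft : ∫ μ in Iic a, f μ ≤ ∫ μ in Ioi a, f μ := by
    rw [← integral_Ici_eq_integral_Ioi, ← setIntegral_Iic_comp_reflect f a]
    exact setIntegral_mono_on hf.integrableOn (hf.comp_sub_left (2 * a)).integrableOn
      measurableSet_Iic h
  have hsplit := intervalIntegral.integral_Iic_add_Ioi (μ := volume) hf.integrableOn
    hf.integrableOn (b := a)
  linarith

noncomputable def postKernel (γ₀ : ℝ → ℝ) (c x μ : ℝ) : ℝ := stdN (x - μ) * γ₀ (μ - c)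

section posterior

variable {γ₀ : ℝ → ℝ} {w c x : ℝ}

lemma postKernel_nonneg (hnonneg : ∀ u, 0 ≤ γ₀ u) (μ : ℝ) : 0 ≤ postKernel γ₀ c x μ :=
  mul_nonneg (stdN_pos _).le (hnonneg _)

lemma integrable_postKernel (hint : Integrable γ₀) : Integrable (postKernel γ₀ c x) :=
  (hint.comp_sub_right c).bdd_mul (c := (Real.sqrt (2 * Real.pi))⁻¹)
    (continuous_stdN.comp (continuous_const.sub continuous_id)).aestronglyMeasurable
    (ae_of_all _ fun μ => by
      rw [Real.norm_eq_abs, abs_of_pos (stdN_pos _)]; exact stdN_le _)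

lemma postKernel_le_reflect (hnonneg : ∀ u, 0 ≤ γ₀ u)
    (hunimodal : ∀ u v : ℝ, |u| ≤ |v| → γ₀ v ≤ γ₀ u) {a μ : ℝ} (hx : (x - a) * (μ - a) ≤ 0)
    (hc : (c - a) * (μ - a) ≤ 0) :
    postKernel γ₀ c x μ ≤ postKernel γ₀ c x (2 * a - μ) := by
  have hγ : |2 * a - μ - c| ≤ |μ - c| := by
    simpa only [abs_sub_comm c] using abs_sub_reflect_le hc
  exact mul_le_mul (stdN_le_stdN_of_abs_le (abs_sub_reflect_le hx)) (hunimodal _ _ hγ)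
    (hnonneg _) (stdN_pos _).le

lemma conv_pos (hnonneg : ∀ u, 0 ≤ γ₀ u) (hint : Integrable γ₀) (hdens : ∫ u : ℝ, γ₀ u = 1) :
    0 < conv γ₀ c x := by
  change 0 < ∫ μ, postKernel γ₀ c x μ
  have hsupp : Function.support (postKernel γ₀ c x) = Function.support (fun μ => γ₀ (μ - c)) := by
    ext μ; simp [postKernel, (stdN_pos _).ne']
  rw [integral_pos_iff_support_of_nonneg (postKernel_nonneg hnonneg) (integrable_postKernel hint),
    hsupp, ← integral_pos_iff_support_of_nonneg (fun _ => hnonneg _) (hint.comp_sub_right c),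
    integral_sub_right_eq_self γ₀ c, hdens]
  exact one_pos

lemma marg_pos (hnonneg : ∀ u, 0 ≤ γ₀ u) (hint : Integrable γ₀) (hdens : ∫ u : ℝ, γ₀ u = 1)
    (hw0 : 0 ≤ w) (hw1 : w ≤ 1) : 0 < marg γ₀ w c x := by
  have hg := conv_pos (c := c) (x := x) hnonneg hint hdens
  unfold marg
  rcases hw1.lt_or_eq with hw1 | rfl
  · linarith [mul_pos (sub_pos.mpr hw1) (stdN_pos x), mul_nonneg hw0 hg.le]
  · simpa using hg

lemma setIntegral_Iic_postKernel_lt_half_conv (hnonneg : ∀ u, 0 ≤ γ₀ u)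
    (hint : Integrable γ₀) (hdens : ∫ u : ℝ, γ₀ u = 1)
    (hunimodal : ∀ u v : ℝ, |u| ≤ |v| → γ₀ v ≤ γ₀ u) {a t : ℝ} (ht : t < a)
    (hx : a ≤ x) (hc : a ≤ c) :
    ∫ μ in Iic t, postKernel γ₀ c x μ < conv γ₀ c x / 2 := by
  have hk := integrable_postKernel (c := c) (x := x) hint
  have hsplit : (∫ μ in Iic t, postKernel γ₀ c x μ) + ∫ μ in Ioc t a, postKernel γ₀ c x μ
      ≤ conv γ₀ c x / 2 := by
    rw [← setIntegral_union (Iic_disjoint_Ioc le_rfl) measurableSet_Ioc hk.integrableOn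
      hk.integrableOn, Iic_union_Ioc_eq_Iic ht.le]
    refine setIntegral_Iic_le_half_integral_of_reflect hk fun μ hμ => ?_
    exact postKernel_le_reflect hnonneg hunimodal (by nlinarith) (by nlinarith)
  rcases (hnonneg (t - c)).eq_or_lt with hzero | hpos
  · have hvanish : ∫ μ in Iic t, postKernel γ₀ c x μ = 0 := by
      refine setIntegral_eq_zero_of_forall_eq_zero fun μ (hμ : μ ≤ t) => ?_
      have hγ : γ₀ (μ - c) ≤ γ₀ (t - c) :=
        hunimodal _ _ (by rw [abs_of_neg (by linarith), abs_of_neg (by linarith)]; linarith)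
      simp only [postKernel, le_antisymm (hzero ▸ hγ) (hnonneg _), mul_zero]
    rw [hvanish]
    exact half_pos (conv_pos hnonneg hint hdens)
  · have hmiddle : 0 < ∫ μ in Ioc t a, postKernel γ₀ c x μ := by
      rw [← intervalIntegral.integral_of_le ht.le]
      refine intervalIntegral.intervalIntegral_pos_of_pos_on hk.intervalIntegrable
        (fun μ hμ => mul_pos (stdN_pos _) (hpos.trans_le (hunimodal _ _ ?_))) ht
      rw [abs_of_neg (by linarith [hμ.2]), abs_of_neg (by linarith)]
      linarith [hμ.1]
    linarith

lemma half_le_postCDF (hnonneg : ∀ u, 0 ≤ γ₀ u) (hint : Integrable γ₀)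
    (hdens : ∫ u : ℝ, γ₀ u = 1) (hunimodal : ∀ u v : ℝ, |u| ≤ |v| → γ₀ v ≤ γ₀ u)
    (hw0 : 0 ≤ w) (hw1 : w ≤ 1) {a : ℝ} (ha : 0 ≤ a) (hx : x ≤ a) (hc : c ≤ a) :
    1 / 2 ≤ postCDF γ₀ w c x a := by
  have hmass : conv γ₀ c x / 2 ≤ ∫ μ in Iic a, postKernel γ₀ c x μ :=
    half_integral_le_setIntegral_Iic_of_reflect (integrable_postKernel hint) fun μ hμ =>
      postKernel_le_reflect hnonneg hunimodal (by nlinarith) (by nlinarith)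
  have hatom : 0 ≤ (1 - w) * stdN x := mul_nonneg (by linarith) (stdN_pos x).le
  rw [postCDF, if_pos ha, le_div_iff₀ (marg_pos hnonneg hint hdens hw0 hw1), marg]
  change _ ≤ _ + w * ∫ μ in Iic a, postKernel γ₀ c x μ
  linarith [mul_le_mul_of_nonneg_left hmass hw0]

lemma postCDF_lt_half (hnonneg : ∀ u, 0 ≤ γ₀ u) (hint : Integrable γ₀)
    (hdens : ∫ u : ℝ, γ₀ u = 1) (hunimodal : ∀ u v : ℝ, |u| ≤ |v| → γ₀ v ≤ γ₀ u)
    (hw0 : 0 ≤ w) (hw1 : w ≤ 1) {a t : ℝ} (ht : t < a) (ha : a ≤ 0) (hx : a ≤ x)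
    (hc : a ≤ c) : postCDF γ₀ w c x t < 1 / 2 := by
  have hmass := setIntegral_Iic_postKernel_lt_half_conv hnonneg hint hdens hunimodal ht hx hc
  rw [postCDF, if_neg (by linarith), div_lt_iff₀ (marg_pos hnonneg hint hdens hw0 hw1), marg]
  change _ + w * ∫ μ in Iic t, postKernel γ₀ c x μ < _
  rcases hw0.eq_or_lt with rfl | hw
  · simpa using stdN_pos x
  · linarith [mul_lt_mul_of_pos_left hmass hw, mul_nonneg (sub_nonneg.mpr hw1) (stdN_pos x).le]

end posterior

theorem stmt2_general (γ₀ : ℝ → ℝ) (hnonneg : ∀ u, 0 ≤ γ₀ u)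
    (hint : Integrable γ₀) (hdens : ∫ u : ℝ, γ₀ u = 1)
    (hunimodal : ∀ u v : ℝ, |u| ≤ |v| → γ₀ v ≤ γ₀ u) :
    ∀ (x w c : ℝ), 0 ≤ w → w ≤ 1 → |postMedian γ₀ w c x| ≤ max |x| |c| := by
  intro x w c hw0 hw1
  set M := max |x| |c|
  obtain ⟨hMx, hxM⟩ := abs_le.mp (le_max_left |x| |c|)
  obtain ⟨hMc, hcM⟩ := abs_le.mp (le_max_right |x| |c|)
  have hM : 0 ≤ M := (abs_nonneg x).trans (le_max_left _ _)
  have hmem : 1 / 2 ≤ postCDF γ₀ w c x M :=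
    half_le_postCDF hnonneg hint hdens hunimodal hw0 hw1 hM hxM hcM
  have hlower : ∀ t ∈ {t : ℝ | 1 / 2 ≤ postCDF γ₀ w c x t}, -M ≤ t := fun t ht =>
    not_lt.mp fun htM => (postCDF_lt_half hnonneg hint hdens hunimodal hw0 hw1 htM
      (by linarith) hMx hMc).not_ge ht
  exact abs_le.mpr ⟨le_csInf ⟨M, hmem⟩ hlower, csInf_le ⟨-M, hlower⟩ hmem⟩

/-- Under the prior `(1−w)δ₀ + w γ₀(·−c)` with `γ₀` symmetric about `0` and unimodal,
and likelihood `X | μ ∼ N(μ,1)`, the posterior median satisfies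
`|δ(x;w,c)| ≤ |x| ∨ |c|` for all `x`, all `w ∈ [0,1]` and all `c`. -/
theorem stmt2 (γ₀ : ℝ → ℝ) (hmeas : Measurable γ₀) (hnonneg : ∀ u, 0 ≤ γ₀ u)
    (hint : Integrable γ₀) (hdens : ∫ u : ℝ, γ₀ u = 1)
    (hsymm : ∀ u, γ₀ (-u) = γ₀ u)
    (hunimodal : ∀ u v : ℝ, |u| ≤ |v| → γ₀ v ≤ γ₀ u) :
    ∀ (x w c : ℝ), 0 ≤ w → w ≤ 1 → |postMedian γ₀ w c x| ≤ max |x| |c| :=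
  stmt2_general γ₀ hnonneg hint hdens hunimodal
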